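/- Let R be an associative unital ring (not necessarily commutative), α : ℤ → R a family of elements, and S_s^k(n) the associated non-commutative Svinin polynomials. Let m ≥ 0 be an integer and let d_0, d_2, …, d_{2m} be central elements of R. Define P_{0,n} := Σ_{r=0}^{m} d_{2r} · S_{r+1}^r(n+r−1). Then the following are equivalent: (i) for every n ∈ ℤ, P_{0,n−1} · α_{n−1} − α_n · P_{0,n+1} = 1; (ii) there exists an element c_0 ∈ R such that α satisfies the m-th member of the non-commutative discrete first Painlevé hierarchy, i.e. Σ_{r=1}^{m+1} d_{2(r−1)} · S_r^r(n+r−1) + (n·1 − c_0) = 0 for every n ∈ ℤ (where n·1 denotes the image of the integer n in R). -/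

import Mathlib

/-- Non-commutative Svinin polynomials: `svinin α s k n` is `S_s^k(n)`, defined by
`S_s^0(n) = 1` and `S_s^k(n) = Σ_{j=0}^{s−1} α_{n−k−j+1} · S_{s−j}^{k−1}(n−j)` for `k ≥ 1`. -/
def svinin {R : Type*} [Ring R] (α : ℤ → R) : ℕ → ℕ → ℤ → R
  | _, 0, _ => 1
  | s, k + 1, n =>
      ∑ j ∈ Finset.range s,
        α (n - ((k : ℤ) + 1) - (j : ℤ) + 1) * svinin α (s - j) k (n - (j : ℤ))

/-- `P0 α m d n` is `P_{0,n} = Σ_{r=0}^{m} d_{2r} · S_{r+1}^r(n+r−1)`,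
where `d r` stands for `d_{2r}`. -/
def P0 {R : Type*} [Ring R] (α : ℤ → R) (m : ℕ) (d : ℕ → R) (n : ℤ) : R :=
  ∑ r ∈ Finset.range (m + 1), d r * svinin α (r + 1) r (n + (r : ℤ) - 1)

/-
Let `H(n) = Σ_{r=0}^{m} d_{2r} S_{r+1}^{r+1}(n+r)` (`painleveSum`), so that the Painlevé
equation reads `H(n) + n - c₀ = 0`. Peeling off the first term of the defining sum of
`S_{r+1}^{r+1}(n)`, or its last term in the mirrored recursion
`S_s^{k+1}(n) = Σ_{j<s} S_{j+1}^k(n-1) α_{n-j}`, gives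
`S_{r+1}^{r+1}(n-1) - S_{r+1}^{r+1}(n) = S_{r+1}^r(n-2) α_{n-r-1} - α_{n-r} S_{r+1}^r(n)`.
Since the `d_{2r}` are central, summing over `r` turns the left side of (i) into the telescoping
difference `H(n-1) - H(n)`, and `H(n-1) - H(n) = 1` for all `n` says exactly `H(n) = c₀ - n`.
-/

open Finset

theorem forall_sub_one_sub_eq_one_iff {G : Type*} [AddCommGroupWithOne G] (f : ℤ → G) :
    (∀ n, f (n - 1) - f n = 1) ↔ ∃ c, ∀ n : ℤ, f n = c - n := by
  constructor
  · intro h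
    refine ⟨f 0, fun n => ?_⟩
    induction n using Int.induction_on with
    | zero => simp
    | succ i ih =>
      have h₁ := h (i + 1)
      rw [add_sub_cancel_right] at h₁
      rw [← sub_sub_self (f i) (f (i + 1)), h₁, ih]
      push_cast
      abel
    | pred i ih =>
      rw [← sub_add_cancel (f (-i - 1)) (f (-i)), h, ih]
      push_cast
      abel
  · rintro ⟨c, hc⟩ n
    rw [hc, hc]
    push_cast
    abel

section Svinin

variable {R : Type*} [Ring R] (α : ℤ → R)

theorem svinin_succ (s k : ℕ) (n : ℤ) :
    svinin α s (k + 1) n = ∑ j ∈ range s, α (n - k - j) * svinin α (s - j) k (n - j) := by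
  rw [svinin]
  refine sum_congr rfl fun j _ => ?_
  rw [show n - (k + 1) - j + 1 = n - k - j by ring]

theorem svinin_succ_eq_sum_mul (k s : ℕ) (n : ℤ) :
    svinin α s (k + 1) n = ∑ j ∈ range s, svinin α (j + 1) k (n - 1) * α (n - j) := by
  induction k generalizing s n with
  | zero =>
    rw [svinin_succ]
    refine sum_congr rfl fun j _ => ?_
    simp [svinin]
  | succ k ih =>
    let g : ℕ → ℕ → R := fun j i =>
      α (n - 1 - k - j) * (svinin α (i + 1) k (n - 1 - j) * α (n - j - i))
    calc svinin α s (k + 1 + 1) n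
        = ∑ j ∈ range s, ∑ i ∈ range (s - j), g j i := by
          rw [svinin_succ]
          refine sum_congr rfl fun j _ => ?_
          rw [ih, mul_sum]
          refine sum_congr rfl fun i _ => ?_
          simp only [g]
          rw [show n - ((k + 1 : ℕ) : ℤ) - j = n - 1 - k - j by push_cast; ring,
            show n - j - 1 = n - 1 - j by ring]
      _ = ∑ l ∈ range s, ∑ j ∈ range (l + 1), g j (l - j) := (sum_range_diag_flip s g).symm
      _ = ∑ l ∈ range s, svinin α (l + 1) (k + 1) (n - 1) * α (n - l) := by
          refine sum_congr rfl fun l _ => ?_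
          rw [svinin_succ, sum_mul]
          refine sum_congr rfl fun j hj => ?_
          have hjl : j ≤ l := Nat.lt_succ_iff.mp (mem_range.mp hj)
          simp only [g]
          rw [show l + 1 - j = l - j + 1 by omega, Nat.cast_sub hjl, mul_assoc,
            show n - j - (l - j) = n - l by ring]

theorem svinin_succ_succ_eq_mul_add (s k : ℕ) (n : ℤ) :
    svinin α (s + 1) (k + 1) n
      = α (n - k) * svinin α (s + 1) k n + svinin α s (k + 1) (n - 1) := by
  rw [svinin_succ, sum_range_succ', svinin_succ α s k (n - 1), add_comm]
  congr 1
  · simp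
  · refine sum_congr rfl fun j _ => ?_
    rw [show s + 1 - (j + 1) = s - j by omega, show n - k - ((j + 1 : ℕ) : ℤ) = n - 1 - k - j by
      push_cast; ring, show n - ((j + 1 : ℕ) : ℤ) = n - 1 - j by push_cast; ring]

theorem svinin_succ_succ_eq_add_mul (s k : ℕ) (n : ℤ) :
    svinin α (s + 1) (k + 1) n
      = svinin α s (k + 1) n + svinin α (s + 1) k (n - 1) * α (n - s) := by
  rw [svinin_succ_eq_sum_mul, sum_range_succ, svinin_succ_eq_sum_mul]

theorem svinin_diag_sub (r : ℕ) (n : ℤ) :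
    svinin α (r + 1) (r + 1) (n - 1 + r) - svinin α (r + 1) (r + 1) (n + r)
      = svinin α (r + 1) r (n - 1 + r - 1) * α (n - 1)
        - α n * svinin α (r + 1) r (n + 1 + r - 1) := by
  rw [svinin_succ_succ_eq_add_mul, svinin_succ_succ_eq_mul_add,
    show n - 1 + r - r = n - 1 by ring, show n + r - r = n by ring,
    show n + r - 1 = n - 1 + r by ring, show n + 1 + r - 1 = n + r by ring]
  abel

def painleveSum (m : ℕ) (d : ℕ → R) (n : ℤ) : R :=
  ∑ r ∈ range (m + 1), d r * svinin α (r + 1) (r + 1) (n + r)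

theorem sum_Icc_eq_painleveSum (m : ℕ) (d : ℕ → R) (n : ℤ) :
    ∑ r ∈ Icc 1 (m + 1), d (r - 1) * svinin α r r (n + r - 1) = painleveSum α m d n := by
  rw [← Ico_add_one_right_eq_Icc, sum_Ico_eq_sum_range, painleveSum, add_tsub_cancel_right]
  refine sum_congr rfl fun r _ => ?_
  rw [add_tsub_cancel_left, add_comm 1 r]
  push_cast
  ring_nf

theorem P0_mul_sub_mul_P0 (m : ℕ) (d : ℕ → R)
    (hd : ∀ k ≤ m, d k ∈ Set.center R) (n : ℤ) :
    P0 α m d (n - 1) * α (n - 1) - α n * P0 α m d (n + 1)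
      = painleveSum α m d (n - 1) - painleveSum α m d n := by
  simp only [P0, painleveSum, sum_mul, mul_sum, ← sum_sub_distrib]
  refine sum_congr rfl fun r hr => ?_
  have hdr : Commute (α n) (d r) :=
    ((Set.mem_center_iff.mp (hd r (Nat.lt_succ_iff.mp (mem_range.mp hr)))).comm (α n)).symm
  rw [hdr.left_comm, mul_assoc, ← mul_sub, ← mul_sub, svinin_diag_sub]

end Svinin

/-- The compatibility equation `P_{0,n−1} · α_{n−1} − α_n · P_{0,n+1} = 1` for all `n` holds
iff `α` satisfies the `m`-th member of the non-commutative discrete first Painlevé hierarchy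
`Σ_{r=1}^{m+1} d_{2(r−1)} · S_r^r(n+r−1) + (n·1 − c_0) = 0` for some constant `c_0`. -/
theorem dPIm_noncommutative {R : Type*} [Ring R] (α : ℤ → R)
    (m : ℕ) (d : ℕ → R) (hd : ∀ k ≤ m, d k ∈ Set.center R) :
    (∀ n : ℤ, P0 α m d (n - 1) * α (n - 1) - α n * P0 α m d (n + 1) = 1) ↔
    (∃ c₀ : R, ∀ n : ℤ,
      (∑ r ∈ Finset.Icc 1 (m + 1), d (r - 1) * svinin α r r (n + (r : ℤ) - 1))
        + ((n : R) - c₀) = 0) := by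
  simp only [P0_mul_sub_mul_P0 α m d hd, sum_Icc_eq_painleveSum, add_eq_zero_iff_eq_neg, neg_sub]
  exact forall_sub_one_sub_eq_one_iff (painleveSum α m d)
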